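/- Let (σ₁,σ₂) be a local umbilic-free Legendre map in curvature line coordinates on U, and let 𝔭 ∈ ℝ^6 be timelike, ⟨𝔭,𝔭⟩ < 0. If ⟨σ₁(p),𝔭⟩ = 0 for every p ∈ U, then ∂_uσ₁ ∈ span{σ₁} at every point. That is, if a curvature sphere congruence s₁ of an umbilic-free Legendre map takes values in the conformal geometry ⟨𝔭⟩^⊥, then s₁ is constant along the leaves of its curvature direction T₁, so the Legendre map parametrises a regular curve (point sphere curve) in the conformal geometry of ⟨𝔭⟩^⊥. -/

import Mathlib

noncomputable section

/-- `ℝ^{4,2}`: `ℝ^6` with a bilinear form of signature (4,2). -/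
abbrev V6 : Type := Fin 6 → ℝ

/-- The symmetric bilinear form of signature (4,2) on `ℝ^6`. -/
def form (x y : V6) : ℝ :=
  x 0 * y 0 + x 1 * y 1 + x 2 * y 2 + x 3 * y 3 - x 4 * y 4 - x 5 * y 5

/-- Partial derivative in the first (`u`) coordinate. -/
def pu (σ : ℝ × ℝ → V6) (p : ℝ × ℝ) : V6 := fderiv ℝ σ p (1, 0)

/-- Partial derivative in the second (`v`) coordinate. -/
def pv (σ : ℝ × ℝ → V6) (p : ℝ × ℝ) : V6 := fderiv ℝ σ p (0, 1)

/-- The contact plane `f = span{σ₁, σ₂}`. -/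
def spanF (σ₁ σ₂ : ℝ × ℝ → V6) (p : ℝ × ℝ) : Submodule ℝ V6 :=
  Submodule.span ℝ {σ₁ p, σ₂ p}

/-- A local umbilic-free Legendre map in curvature line coordinates `(u,v)` on `U`,
given by lifts `σ₁, σ₂` of the two curvature sphere congruences, with curvature
directions `T₁ = ∂_u` (for `s₁ = span{σ₁}`) and `T₂ = ∂_v` (for `s₂ = span{σ₂}`). -/
structure IsLegendre (U : Set (ℝ × ℝ)) (σ₁ σ₂ : ℝ × ℝ → V6) : Prop where
  open_U : IsOpen U
  smooth₁ : ContDiffOn ℝ (⊤ : ℕ∞) σ₁ U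
  smooth₂ : ContDiffOn ℝ (⊤ : ℕ∞) σ₂ U
  indep : ∀ p ∈ U, LinearIndependent ℝ ![σ₁ p, σ₂ p]
  iso₁₁ : ∀ p ∈ U, form (σ₁ p) (σ₁ p) = 0
  iso₁₂ : ∀ p ∈ U, form (σ₁ p) (σ₂ p) = 0
  iso₂₂ : ∀ p ∈ U, form (σ₂ p) (σ₂ p) = 0
  contact_u : ∀ p ∈ U, form (pu σ₁ p) (σ₂ p) = 0
  contact_v : ∀ p ∈ U, form (pv σ₁ p) (σ₂ p) = 0
  curv₁ : ∀ p ∈ U, pu σ₁ p ∈ spanF σ₁ σ₂ p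
  curv₂ : ∀ p ∈ U, pv σ₂ p ∈ spanF σ₁ σ₂ p
  umb₁ : ∀ p ∈ U, pv σ₁ p ∉ spanF σ₁ σ₂ p
  umb₂ : ∀ p ∈ U, pu σ₂ p ∉ spanF σ₁ σ₂ p

/- ## Auxiliary lemmas -/

lemma sq_zero_of (a : ℝ) (h : a ^ 2 = 0) : a = 0 :=
  pow_eq_zero_iff two_ne_zero |>.mp h

lemma key_aux (z0 z1 z2 z3 z4 z5 w0 w1 w2 w3 w4 w5 : ℝ)
    (h1 : z0*z0 + z1*z1 + z2*z2 + z3*z3 - z4*z4 - z5*z5 = 0)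
    (h2 : z0*w0 + z1*w1 + z2*w2 + z3*w3 - z4*w4 - z5*w5 = 0)
    (h3 : w0*w0 + w1*w1 + w2*w2 + w3*w3 - w4*w4 - w5*w5 < 0)
    (h4 : z4*w5 - z5*w4 = 0) :
    z0 = 0 ∧ z1 = 0 ∧ z2 = 0 ∧ z3 = 0 ∧ z4 = 0 ∧ z5 = 0 := by
  have hCS : (z0*w0 + z1*w1 + z2*w2 + z3*w3) ^ 2 ≤
      (z0^2 + z1^2 + z2^2 + z3^2) * (w0^2 + w1^2 + w2^2 + w3^2) := by
    nlinarith [sq_nonneg (z0*w1 - z1*w0), sq_nonneg (z0*w2 - z2*w0),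
      sq_nonneg (z0*w3 - z3*w0), sq_nonneg (z1*w2 - z2*w1),
      sq_nonneg (z1*w3 - z3*w1), sq_nonneg (z2*w3 - z3*w2)]
  have hA : z0*w0 + z1*w1 + z2*w2 + z3*w3 = z4*w4 + z5*w5 := by linarith
  have hP : z0^2 + z1^2 + z2^2 + z3^2 = z4^2 + z5^2 := by linear_combination h1
  have hLag : (z4*w4 + z5*w5) ^ 2 = (z4^2 + z5^2) * (w4^2 + w5^2) := by
    linear_combination (-(z4*w5 - z5*w4)) * h4
  have hCS2 : (z4^2 + z5^2) * (w4^2 + w5^2) ≤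
      (z4^2 + z5^2) * (w0^2 + w1^2 + w2^2 + w3^2) := by
    calc (z4^2 + z5^2) * (w4^2 + w5^2) = (z4*w4 + z5*w5) ^ 2 := hLag.symm
      _ = (z0*w0 + z1*w1 + z2*w2 + z3*w3) ^ 2 := by rw [hA]
      _ ≤ (z0^2 + z1^2 + z2^2 + z3^2) * (w0^2 + w1^2 + w2^2 + w3^2) := hCS
      _ = (z4^2 + z5^2) * (w0^2 + w1^2 + w2^2 + w3^2) := by rw [hP]
  have h3' : w0^2 + w1^2 + w2^2 + w3^2 < w4^2 + w5^2 := by nlinarith [h3, sq_nonneg w0]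
  have hSnn : (0:ℝ) ≤ z4^2 + z5^2 := by positivity
  have hS : z4^2 + z5^2 = 0 := by
    rcases hSnn.lt_or_eq with hpos | heq
    · exact absurd hCS2 (not_le.mpr (mul_lt_mul_of_pos_left h3' hpos)).elim
    · exact heq.symm
  have e4 : z4 = 0 := sq_zero_of _ (le_antisymm (by linarith [sq_nonneg z5]) (sq_nonneg z4))
  have e5 : z5 = 0 := sq_zero_of _ (le_antisymm (by linarith [sq_nonneg z4]) (sq_nonneg z5))
  have hP0 : z0^2 + z1^2 + z2^2 + z3^2 = 0 := by rw [hP, e4, e5]; ring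
  have e0 : z0 = 0 := sq_zero_of _ (le_antisymm (by linarith [sq_nonneg z1, sq_nonneg z2, sq_nonneg z3]) (sq_nonneg z0))
  have e1 : z1 = 0 := sq_zero_of _ (le_antisymm (by linarith [sq_nonneg z0, sq_nonneg z2, sq_nonneg z3]) (sq_nonneg z1))
  have e2 : z2 = 0 := sq_zero_of _ (le_antisymm (by linarith [sq_nonneg z0, sq_nonneg z1, sq_nonneg z3]) (sq_nonneg z2))
  have e3 : z3 = 0 := sq_zero_of _ (le_antisymm (by linarith [sq_nonneg z0, sq_nonneg z1, sq_nonneg z2]) (sq_nonneg z3))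
  exact ⟨e0, e1, e2, e3, e4, e5⟩

/-- A null vector orthogonal to a timelike vector `w`, whose negative part is parallel
to that of `w`, must vanish. -/
lemma key (z w : V6) (h1 : form z z = 0) (h2 : form z w = 0) (h3 : form w w < 0)
    (h4 : z 4 * w 5 - z 5 * w 4 = 0) : z = 0 := by
  obtain ⟨e0, e1, e2, e3, e4, e5⟩ :=
    key_aux (z 0) (z 1) (z 2) (z 3) (z 4) (z 5) (w 0) (w 1) (w 2) (w 3) (w 4) (w 5)
      h1 h2 h3 h4
  funext i
  fin_cases i <;> assumption

/-- `form · 𝔭` as a continuous linear functional. -/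
def formL (𝔭 : V6) : V6 →L[ℝ] ℝ :=
  LinearMap.toContinuousLinearMap
    { toFun := fun x => form x 𝔭
      map_add' := by intro x y; simp [form]; ring
      map_smul' := by intro c x; simp [form]; ring }

lemma form_smul_add (a b : ℝ) (x y w : V6) :
    form (a • x + b • y) w = a * form x w + b * form y w := by
  simp [form]; ring

lemma form_comm (x y : V6) : form x y = form y x := by simp [form]; ring

/-- If a curvature sphere congruence `s₁` of an umbilic-free Legendre map takes values in
the conformal geometry `⟨𝔭⟩^⊥` of a timelike vector `𝔭`, then `s₁` is constant along the
leaves of its curvature direction `T₁ = ∂_u`. -/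
theorem curvature_sphere_in_conformal_geometry_is_circular
    (U : Set (ℝ × ℝ)) (σ₁ σ₂ : ℝ × ℝ → V6)
    (hL : IsLegendre U σ₁ σ₂)
    (𝔭 : V6) (h𝔭 : form 𝔭 𝔭 < 0)
    (hperp : ∀ p ∈ U, form (σ₁ p) 𝔭 = 0) :
    ∀ p ∈ U, pu σ₁ p ∈ Submodule.span ℝ ({σ₁ p} : Set V6) := by
  intro p hp
  have hUnhds : U ∈ nhds p := hL.open_U.mem_nhds hp
  have hdiff : DifferentiableAt ℝ σ₁ p :=
    ((hL.smooth₁.contDiffAt hUnhds).differentiableAt (by simp))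
  -- Step 1: ⟨∂ᵤσ₁, 𝔭⟩ = 0, by differentiating ⟨σ₁, 𝔭⟩ = 0.
  have hEq : (fun q => formL 𝔭 (σ₁ q)) =ᶠ[nhds p] fun _ => (0:ℝ) := by
    filter_upwards [hUnhds] with q hq
    simpa [formL] using hperp q hq
  have hfd : fderiv ℝ (fun q => formL 𝔭 (σ₁ q)) p = 0 := by
    rw [hEq.fderiv_eq]; exact fderiv_const_apply 0
  have hcomp : fderiv ℝ (fun q => formL 𝔭 (σ₁ q)) p =
      (formL 𝔭).comp (fderiv ℝ σ₁ p) := by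
    have h := fderiv_comp p (formL 𝔭).differentiableAt hdiff
    rw [(formL 𝔭).fderiv] at h
    exact h
  have hpu𝔭 : form (pu σ₁ p) 𝔭 = 0 := by
    have : (formL 𝔭).comp (fderiv ℝ σ₁ p) (1, 0) = 0 := by
      rw [← hcomp, hfd]; rfl
    simpa [formL, pu] using this
  -- Step 2: write ∂ᵤσ₁ = a • σ₁ + b • σ₂.
  obtain ⟨a, b, hab⟩ := Submodule.mem_span_pair.mp (hL.curv₁ p hp)
  -- Step 3: ⟨σ₂ p, 𝔭⟩ ≠ 0.
  have h𝔭σ₂ : form (σ₂ p) 𝔭 ≠ 0 := by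
    intro hc
    set x := σ₁ p with hx
    set y := σ₂ p with hy
    have hind := hL.indep p hp
    have hpair := LinearIndependent.pair_iff.mp hind
    have hxne : x ≠ 0 := by
      intro h0
      have := (hpair 1 0 (by rw [← hx, h0]; simp)).1
      exact one_ne_zero this
    have hxx : form x x = 0 := hL.iso₁₁ p hp
    have hyy : form y y = 0 := hL.iso₂₂ p hp
    have hxy : form x y = 0 := hL.iso₁₂ p hp
    have hx𝔭 : form x 𝔭 = 0 := hperp p hp
    by_cases hax : x 4 * 𝔭 5 - x 5 * 𝔭 4 = 0
    · exact hxne (key x 𝔭 hxx hx𝔭 h𝔭 hax)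
    · set c := x 4 * 𝔭 5 - x 5 * 𝔭 4 with hcdef
      set d := y 4 * 𝔭 5 - y 5 * 𝔭 4 with hddef
      -- z = d • x - c • y has negative part parallel to 𝔭's
      have hz4 : (d • x + (-c) • y) 4 * 𝔭 5 - (d • x + (-c) • y) 5 * 𝔭 4 = 0 := by
        simp only [Pi.add_apply, Pi.smul_apply, smul_eq_mul, hcdef, hddef]
        ring
      have hzz : form (d • x + (-c) • y) (d • x + (-c) • y) = 0 := by
        simp only [form, Pi.add_apply, Pi.smul_apply, smul_eq_mul] at hxx hyy hxy ⊢
        linear_combination (d^2) * hxx + (c^2) * hyy + (-2*c*d) * hxy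
      have hz𝔭 : form (d • x + (-c) • y) 𝔭 = 0 := by
        simp only [form, Pi.add_apply, Pi.smul_apply, smul_eq_mul] at hx𝔭 hc ⊢
        linear_combination d * hx𝔭 + (-c) * hc
      have hz0 := key (d • x + (-c) • y) 𝔭 hzz hz𝔭 h𝔭 hz4
      have := hpair d (-c) hz0
      exact hax (neg_eq_zero.mp this.2)
  -- Step 4: conclude b = 0.
  have hform : form (pu σ₁ p) 𝔭 = a * form (σ₁ p) 𝔭 + b * form (σ₂ p) 𝔭 := by
    rw [← hab, form_smul_add]
  rw [hpu𝔭, hperp p hp] at hform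
  have hb : b = 0 := by
    have : b * form (σ₂ p) 𝔭 = 0 := by linarith
    exact (mul_eq_zero.mp this).resolve_right h𝔭σ₂
  rw [Submodule.mem_span_singleton]
  exact ⟨a, by rw [← hab, hb]; simp⟩
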